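/- Let L be a Moufang loop with a central subloop Z of order 2 such that every square, every commutator [x,y], and every associator [x,y,z] of L lies in Z. Then the associator is linear in each argument: for all x, w, y, z ∈ L, [x*w, y, z] = [x,y,z]*[w,y,z], [x, y*w, z] = [x,y,z]*[x,w,z], and [x, y, z*w] = [x,y,z]*[x,y,w]. -/

import Mathlib

/-!
Because associators are central, they satisfy Mac Lane's pentagon relation
`[x,y,zw][xy,z,w] = [y,z,w][x,yz,w][x,y,z]`. The Moufang law turns into `[x,y,zx] = [y,z,x]`
together with flexibility `[x,y,x] = 1`; with the pentagon this gives the right alternative law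
`[u,x,x] = 1` and, since squares are central and associators have order at most `2`,
`[x,yz,z] = [x,y,z]`. Writing `z = wx`, these combine to the cyclic symmetry
`[x,y,z] = [y,z,x]`. Finally, up to cyclic symmetry, the pentagons at `(x,y,z,w)`, `(y,z,w,x)` and
`(z,w,x,y)` are three linear relations over `𝔽₂` among the values of the associator, and they force
`[x,y,zw] = [x,y,z][x,y,w]`; cycling the arguments gives linearity in the other two slots.
-/

/-- `a` lies in the center of the loop `L`. -/
def Central {L : Type*} [Mul L] (a : L) : Prop :=
  (∀ y : L, a * y = y * a) ∧
  (∀ y z : L, a * (y * z) = (a * y) * z) ∧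
  (∀ y z : L, y * (a * z) = (y * a) * z) ∧
  (∀ y z : L, y * (z * a) = (y * z) * a)

theorem Central.isMulCentral {L : Type*} [Mul L] {a : L} (h : Central a) : IsMulCentral a :=
  ⟨h.1, h.2.1, fun b c => (h.2.2.2 b c).symm⟩

theorem mul_self_eq_one_of_ncard_eq_two {L : Type*} [MulOneClass L] [IsLeftCancelMul L]
    {Z : Set L} (h1 : 1 ∈ Z) (hmul : ∀ a ∈ Z, ∀ b ∈ Z, a * b ∈ Z) (hcard : Z.ncard = 2)
    {n : L} (hn : n ∈ Z) : n * n = 1 := by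
  obtain ⟨a, b, hab, rfl⟩ := Set.ncard_eq_two.mp hcard
  have hnn : n * n = n → n = 1 := fun h => mul_left_cancel (h.trans (mul_one n).symm)
  have := hmul n hn n hn
  simp only [Set.mem_insert_iff, Set.mem_singleton_iff] at h1 hn this
  clear hmul hcard
  grind [one_mul]

theorem eq_mul_of_pentagon_relations {M : Type*} [CommMonoid M] {a b c d p q r s : M}
    (ha : a * a = 1) (hb : b * b = 1) (hc : c * c = 1) (hd : d * d = 1) (hq : q * q = 1)
    (hr : r * r = 1) (h₁ : a * b = q * c * p) (h₂ : d * c = r * a * q) (h₃ : b * a = s * d * r) :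
    a = p * s :=
  calc a = a * (a * a) * (b * b) * (c * c) * (d * d) := by rw [ha, hb, hc, hd]; simp
    _ = a * b * (d * c) * (b * a) * (a * c * d) := by ac_rfl
    _ = q * c * p * (r * a * q) * (s * d * r) * (a * c * d) := by rw [h₁, h₂, h₃]
    _ = p * s * (a * a) * (c * c) * (d * d) * (q * q) * (r * r) := by ac_rfl
    _ = p * s := by rw [ha, hc, hd, hq, hr]; simp

theorem IsMulCentral.eq_of_mul_eq_one {M : Type*} [MulOneClass M] {a b : M} (hb : IsMulCentral b)
    (hbb : b * b = 1) (hab : a * b = 1) : a = b :=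
  calc a = a * (b * b) := by rw [hbb, mul_one]
    _ = b := by rw [← hb.right_assoc, hab, one_mul]

structure IsCentralAssociator {L : Type*} [Mul L] (assoc : L → L → L → L) : Prop where
  mul_assoc_eq (x y z : L) : x * y * z = x * (y * z) * assoc x y z
  isMulCentral (x y z : L) : IsMulCentral (assoc x y z)

def IsMoufang (L : Type*) [Mul L] : Prop :=
  ∀ x y z : L, x * y * (z * x) = x * (y * z) * x

namespace IsCentralAssociator

variable {L : Type*} [MulOneClass L] [IsLeftCancelMul L] {assoc : L → L → L → L}

theorem eq_of_mul_assoc_eq (h : IsCentralAssociator assoc) {x y z u : L}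
    (hu : x * y * z = x * (y * z) * u) : assoc x y z = u :=
  mul_left_cancel ((h.mul_assoc_eq x y z).symm.trans hu)

theorem eq_one_of_left (h : IsCentralAssociator assoc) {n : L} (hn : IsMulCentral n) (y z : L) :
    assoc n y z = 1 :=
  h.eq_of_mul_assoc_eq (by rw [mul_one, hn.left_assoc])

theorem eq_one_of_mid (h : IsCentralAssociator assoc) {n : L} (hn : IsMulCentral n) (x z : L) :
    assoc x n z = 1 :=
  h.eq_of_mul_assoc_eq (by rw [mul_one, hn.mid_assoc])

theorem eq_one_of_right (h : IsCentralAssociator assoc) {n : L} (hn : IsMulCentral n) (x y : L) :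
    assoc x y n = 1 :=
  h.eq_of_mul_assoc_eq (by rw [mul_one, hn.right_assoc])

theorem mid_mul_central (h : IsCentralAssociator assoc) {n : L} (hn : IsMulCentral n)
    (x y z : L) : assoc x (y * n) z = assoc x y z :=
  h.eq_of_mul_assoc_eq <| calc
    x * (y * n) * z = x * y * z * n := by rw [← hn.right_assoc, ← hn.right_comm]
    _ = x * (y * z) * n * assoc x y z := by
      rw [h.mul_assoc_eq x y z, ← (h.isMulCentral x y z).right_comm]
    _ = x * (y * n * z) * assoc x y z := by rw [hn.right_assoc, hn.right_comm]

theorem pentagon (h : IsCentralAssociator assoc) (x y z w : L) :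
    assoc x y (z * w) * assoc (x * y) z w
      = assoc y z w * assoc x (y * z) w * assoc x y z := by
  have hA := h.isMulCentral
  refine mul_left_cancel (a := x * (y * (z * w))) ?_
  calc x * (y * (z * w)) * (assoc x y (z * w) * assoc (x * y) z w)
      = x * y * z * w := by
        rw [h.mul_assoc_eq (x * y), h.mul_assoc_eq x y (z * w), (hA _ _ _).right_assoc]
    _ = x * (y * z * w) * assoc x (y * z) w * assoc x y z := by
        rw [h.mul_assoc_eq x y z, ← (hA x y z).right_comm, h.mul_assoc_eq x (y * z) w]
    _ = x * (y * (z * w)) * (assoc y z w * assoc x (y * z) w * assoc x y z) := by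
        rw [h.mul_assoc_eq y z w, ← (hA y z w).right_assoc,
          (hA x y z).right_assoc, (hA y z w).mid_assoc, ← (hA x y z).right_assoc]

theorem moufang_eq (h : IsCentralAssociator assoc) (hL : IsMoufang L) (x y z : L) :
    assoc x y (z * x) = assoc y z x * assoc x (y * z) x := by
  have hA := h.isMulCentral
  refine mul_left_cancel (a := x * (y * (z * x))) ?_
  calc x * (y * (z * x)) * assoc x y (z * x) = x * (y * z) * x := by rw [← h.mul_assoc_eq, hL]
    _ = x * (y * (z * x)) * (assoc y z x * assoc x (y * z) x) := by
      rw [h.mul_assoc_eq x (y * z) x, h.mul_assoc_eq y z x, ← (hA y z x).right_assoc,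
        (hA x (y * z) x).right_assoc]

theorem flexible (h : IsCentralAssociator assoc) (hL : IsMoufang L) (x y : L) :
    assoc x y x = 1 := by
  simpa only [h.eq_one_of_mid Set.one_mem_center, h.eq_one_of_left Set.one_mem_center, one_mul]
    using (h.moufang_eq hL x 1 y).symm

theorem moufang (h : IsCentralAssociator assoc) (hL : IsMoufang L) (x y z : L) :
    assoc x y (z * x) = assoc y z x := by
  rw [h.moufang_eq hL, h.flexible hL, mul_one]

theorem left_mul_shift (h : IsCentralAssociator assoc) (hL : IsMoufang L) (x y z : L) :
    assoc (x * y) z x = assoc x y z := by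
  have := h.pentagon x y z x
  rw [h.moufang hL, h.flexible hL, mul_one] at this
  exact mul_left_cancel this

theorem right_alternative (h : IsCentralAssociator assoc) (hL : IsMoufang L)
    (hdivl : ∀ a : L, Function.Surjective (a * ·)) (u x : L) : assoc u x x = 1 := by
  obtain ⟨y, rfl⟩ := hdivl x u
  exact (h.left_mul_shift hL x y x).trans (h.flexible hL x y)

theorem mid_mul_right (h : IsCentralAssociator assoc) (hL : IsMoufang L)
    (hdivl : ∀ a : L, Function.Surjective (a * ·)) (hsq : ∀ x : L, IsMulCentral (x * x))
    (hinv : ∀ x y z : L, assoc x y z * assoc x y z = 1) (x y z : L) :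
    assoc x (y * z) z = assoc x y z := by
  have := h.pentagon x y z z
  rw [h.eq_one_of_right (hsq z), h.right_alternative hL hdivl, h.right_alternative hL hdivl,
    one_mul, one_mul] at this
  exact (h.isMulCentral x y z).eq_of_mul_eq_one (hinv x y z) this.symm

theorem cycle (h : IsCentralAssociator assoc) (hL : IsMoufang L)
    (hdivl : ∀ a : L, Function.Surjective (a * ·)) (hdivr : ∀ a : L, Function.Surjective (· * a))
    (hsq : ∀ x : L, IsMulCentral (x * x)) (hinv : ∀ x y z : L, assoc x y z * assoc x y z = 1)
    (x y z : L) : assoc x y z = assoc y z x := by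
  obtain ⟨w, rfl⟩ := hdivr x z
  calc assoc x y (w * x) = assoc y w x := h.moufang hL x y w
    _ = assoc y (w * (x * x)) x := (h.mid_mul_central (hsq x) y w x).symm
    _ = assoc y (w * x * x) x := by
      rw [h.mul_assoc_eq w x x, h.right_alternative hL hdivl, mul_one]
    _ = assoc y (w * x) x := h.mid_mul_right hL hdivl hsq hinv y (w * x) x

theorem right_mul (h : IsCentralAssociator assoc) (hL : IsMoufang L)
    (hdivl : ∀ a : L, Function.Surjective (a * ·)) (hdivr : ∀ a : L, Function.Surjective (· * a))
    (hsq : ∀ x : L, IsMulCentral (x * x)) (hinv : ∀ x y z : L, assoc x y z * assoc x y z = 1)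
    (x y z w : L) : assoc x y (z * w) = assoc x y z * assoc x y w := by
  have hcyc := h.cycle hL hdivl hdivr hsq hinv
  have h₁ := h.pentagon x y z w
  have h₂ := h.pentagon y z w x
  have h₃ := h.pentagon z w x y
  rw [hcyc (x * y) z w] at h₁
  rw [← hcyc x (y * z) w, ← hcyc x z w, ← hcyc x y (z * w)] at h₂
  rw [hcyc (z * w) x y, hcyc w x y, ← hcyc y z (w * x), ← hcyc x z w] at h₃
  let := Submonoid.center.commMonoid' (M := L)
  let c : L → L → L → Submonoid.center L := fun x y z => ⟨assoc x y z, h.isMulCentral x y z⟩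
  have hc2 : ∀ x y z, c x y z * c x y z = 1 := fun x y z => Subtype.ext (hinv x y z)
  exact congrArg Subtype.val <| eq_mul_of_pentagon_relations (p := c x y z) (s := c x y w)
    (hc2 ..) (hc2 ..) (hc2 ..) (hc2 ..) (hc2 ..) (hc2 ..)
    (Subtype.ext h₁) (Subtype.ext h₂) (Subtype.ext h₃)

end IsCentralAssociator

theorem assoc_trilinear_general
    (L : Type*) [Mul L] [One L]
    (hl : ∀ a b : L, ∃! x : L, a * x = b)
    (hr : ∀ a b : L, ∃! y : L, y * a = b)
    (hid : ∀ x : L, 1 * x = x ∧ x * 1 = x)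
    (hmo : ∀ x y z : L, (x * y) * (z * x) = (x * (y * z)) * x)
    (assoc : L → L → L → L)
    (hassoc : ∀ x y z : L, (x * y) * z = (x * (y * z)) * assoc x y z)
    (Z : Set L)
    (hZ1 : (1 : L) ∈ Z)
    (hZmul : ∀ a ∈ Z, ∀ b ∈ Z, a * b ∈ Z)
    (hZcentral : ∀ n ∈ Z, Central n)
    (hZcard : Z.ncard = 2)
    (hsq : ∀ x : L, x * x ∈ Z)
    (ha : ∀ x y z : L, assoc x y z ∈ Z) :
    ∀ x w y z : L,
      assoc (x * w) y z = assoc x y z * assoc w y z ∧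
      assoc x (y * w) z = assoc x y z * assoc x w z ∧
      assoc x y (z * w) = assoc x y z * assoc x y w := by
  let _ : MulOneClass L := { one_mul := fun x => (hid x).1, mul_one := fun x => (hid x).2 }
  have : IsLeftCancelMul L := ⟨fun a _ _ hxy => (hl a _).unique hxy rfl⟩
  have h : IsCentralAssociator assoc := ⟨hassoc, fun x y z => (hZcentral _ (ha x y z)).isMulCentral⟩
  have hdivl : ∀ a : L, Function.Surjective (a * ·) := fun a b => (hl a b).exists
  have hdivr : ∀ a : L, Function.Surjective (· * a) := fun a b => (hr a b).exists
  have hsq' : ∀ x : L, IsMulCentral (x * x) := fun x => (hZcentral _ (hsq x)).isMulCentral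
  have hinv : ∀ x y z : L, assoc x y z * assoc x y z = 1 := fun x y z =>
    mul_self_eq_one_of_ncard_eq_two hZ1 hZmul hZcard (ha x y z)
  have hcyc := h.cycle hmo hdivl hdivr hsq' hinv
  have hmul := h.right_mul hmo hdivl hdivr hsq' hinv
  intro x w y z
  refine ⟨?_, ?_, hmul x y z w⟩
  · rw [hcyc (x * w), hmul, ← hcyc x, ← hcyc w]
  · rw [← hcyc z x (y * w), hmul, hcyc z x y, hcyc z x w]

theorem assoc_trilinear
    (L : Type*) [Mul L] [One L]
    (hl : ∀ a b : L, ∃! x : L, a * x = b)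
    (hr : ∀ a b : L, ∃! y : L, y * a = b)
    (hid : ∀ x : L, 1 * x = x ∧ x * 1 = x)
    (hmo : ∀ x y z : L, (x * y) * (z * x) = (x * (y * z)) * x)
    (comm : L → L → L) (hcomm : ∀ x y : L, x * y = (y * x) * comm x y)
    (assoc : L → L → L → L)
    (hassoc : ∀ x y z : L, (x * y) * z = (x * (y * z)) * assoc x y z)
    (Z : Set L)
    (hZ1 : (1 : L) ∈ Z)
    (hZmul : ∀ a ∈ Z, ∀ b ∈ Z, a * b ∈ Z)
    (hZcentral : ∀ n ∈ Z, Central n)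
    (hZcard : Z.ncard = 2)
    (hsq : ∀ x : L, x * x ∈ Z)
    (hc : ∀ x y : L, comm x y ∈ Z)
    (ha : ∀ x y z : L, assoc x y z ∈ Z) :
    ∀ x w y z : L,
      assoc (x * w) y z = assoc x y z * assoc w y z ∧
      assoc x (y * w) z = assoc x y z * assoc x w z ∧
      assoc x y (z * w) = assoc x y z * assoc x y w :=
  assoc_trilinear_general L hl hr hid hmo assoc hassoc Z hZ1 hZmul hZcentral hZcard hsq ha
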